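/- Let R be a normal excellent local ring, π: X → Spec(R) a birational projective morphism with X regular, D an ℝ-divisor and Γ a prime divisor on X such that γ_Γ(D) > 0. Then for every s ∈ ℝ_{≥0}, γ_Γ(D + sΓ) = γ_Γ(D) + s. -/

import Mathlib

/-!
Subtracting `m s Γ` maps the effective divisors `∼ m (D + s Γ)` onto those `∼ m D`, shifting
the coefficient along `Γ` by `m s`, as soon as every divisor `∼ m D` that is effective away
from `Γ` is effective. That is where `γ = γ_Γ(D) > 0` enters: if such a `G` had coefficient
`-δ < 0` along `Γ`, then for an effective `H ∼ D` and suitable `n, b ∈ ℕ` the divisor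
`n G + b H` would be effective and `∼ (n m + b) D`, with coefficient along `Γ` below `δ < b γ`,
whereas `γ` bounds that coefficient from below by `(n m + b) γ`.
-/

universe u

/-- A regular local ring: a Noetherian local ring whose maximal ideal can be generated by
`dim A` elements. -/
def IsRegularLocalRing' (A : Type*) [CommRing A] [IsLocalRing A] : Prop :=
  IsNoetherianRing A ∧ ∃ s : Finset A,
    Ideal.span (s : Set A) = IsLocalRing.maximalIdeal A ∧
    (s.card : WithBot (WithTop ℕ)) = ringKrullDim A

/-- A regular ring: a Noetherian ring all of whose localizations at primes are regular local
rings. -/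
def IsRegularRing' (A : Type*) [CommRing A] : Prop :=
  IsNoetherianRing A ∧
    ∀ p : PrimeSpectrum A, IsRegularLocalRing' (Localization.AtPrime p.asIdeal)

/-- The `A`-algebra `B` is geometrically regular (a regular morphism): it is flat, and for
every prime `q` of `A` and every finite field extension `L` of the residue field `κ(q)`,
the ring `L ⊗_A B` is regular. -/
def Algebra.IsGeometricallyRegular (A B : Type u) [CommRing A] [CommRing B] [Algebra A B] :
    Prop :=
  Module.Flat A B ∧
    ∀ (q : PrimeSpectrum A) (L : Type u) [Field L] [Algebra A L]
      [Algebra (IsLocalRing.ResidueField (Localization.AtPrime q.asIdeal)) L]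
      [IsScalarTower A (IsLocalRing.ResidueField (Localization.AtPrime q.asIdeal)) L],
      FiniteDimensional (IsLocalRing.ResidueField (Localization.AtPrime q.asIdeal)) L →
      IsRegularRing' (TensorProduct A L B)

/-- `R` is a G-ring (Grothendieck ring): for every prime `p`, the formal fibers of `R_p` are
geometrically regular, i.e. the completion map `R_p → (R_p)^` is a regular morphism. -/
def IsGrothendieckRing (R : Type u) [CommRing R] : Prop :=
  ∀ p : PrimeSpectrum R,
    Algebra.IsGeometricallyRegular (Localization.AtPrime p.asIdeal)
      (AdicCompletion (IsLocalRing.maximalIdeal (Localization.AtPrime p.asIdeal))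
        (Localization.AtPrime p.asIdeal))

/-- `R` is J-2: every finitely generated `R`-algebra has open regular locus. -/
def IsJTwo (R : Type u) [CommRing R] : Prop :=
  ∀ (n : ℕ) (I : Ideal (MvPolynomial (Fin n) R)),
    IsOpen {p : PrimeSpectrum (MvPolynomial (Fin n) R ⧸ I) |
      IsRegularLocalRing' (Localization.AtPrime p.asIdeal)}

/-- A catenary ring: any two saturated chains of primes with the same endpoints have the
same length. -/
def IsCatenaryRing (A : Type*) [CommRing A] : Prop :=
  ∀ c₁ c₂ : LTSeries (PrimeSpectrum A),
    c₁.head = c₂.head → c₁.last = c₂.last →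
    (∀ i : Fin c₁.length, c₁.toFun i.castSucc ⋖ c₁.toFun i.succ) →
    (∀ i : Fin c₂.length, c₂.toFun i.castSucc ⋖ c₂.toFun i.succ) →
    c₁.length = c₂.length

/-- `R` is universally catenary: every finitely generated `R`-algebra is catenary. -/
def IsUniversallyCatenary (R : Type u) [CommRing R] : Prop :=
  ∀ (n : ℕ) (I : Ideal (MvPolynomial (Fin n) R)),
    IsCatenaryRing (MvPolynomial (Fin n) R ⧸ I)

/-- An excellent ring: a Noetherian, universally catenary G-ring satisfying J-2. -/
def IsExcellentRing (R : Type u) [CommRing R] : Prop :=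
  IsNoetherianRing R ∧ IsUniversallyCatenary R ∧ IsGrothendieckRing R ∧ IsJTwo R

/-- The data of a birational projective morphism `π : X → Spec R` with `X` regular
(a nonsingular model of the normal excellent local domain `R`), recorded through its divisor
theory: the type of prime divisors `E` on `X` (integral closed subschemes of codimension one)
together with the discrete valuations `ord_E = ν_E` of the function field `K = Frac R` of `X`
given by the one-dimensional regular (hence discrete valuation) local rings `O_{X,E}`. -/
structure RegularBirationalModel (R : Type*) [CommRing R] [IsDomain R] where
  /-- The prime divisors on `X`. -/
  PrimeDivisor : Type*
  /-- `ord E f = ν_E(f)`, the order of vanishing of the rational function `f ∈ K` along the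
  prime divisor `E` (the value at `f = 0` is irrelevant). -/
  ord : PrimeDivisor → FractionRing R → ℤ
  ord_mul : ∀ E (x y : FractionRing R), x ≠ 0 → y ≠ 0 →
    ord E (x * y) = ord E x + ord E y
  ord_add : ∀ E (x y : FractionRing R), x ≠ 0 → y ≠ 0 → x + y ≠ 0 →
    min (ord E x) (ord E y) ≤ ord E (x + y)
  /-- Each `O_{X,E}` is a discrete valuation ring with value group `ℤ`. -/
  ord_surj : ∀ E (n : ℤ), ∃ x : FractionRing R, x ≠ 0 ∧ ord E x = n
  /-- Distinct prime divisors give distinct valuations. -/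
  ord_injective : Function.Injective ord
  /-- A nonzero rational function has finitely many zeros and poles: `(f) = Σ_E ν_E(f) E`
  is a divisor. -/
  finite_support : ∀ x : FractionRing R, x ≠ 0 → {E | ord E x ≠ 0}.Finite
  /-- `π : X → Spec R`: every local ring `O_{X,E}` contains `R`. -/
  ord_nonneg : ∀ E (r : R), r ≠ 0 → 0 ≤ ord E (algebraMap R (FractionRing R) r)
  /-- `π` is proper and birational and `X` is normal: `Γ(X, O_X) = R`, i.e. a rational
  function with no poles along any prime divisor of `X` belongs to `R`. -/
  globalSections : ∀ x : FractionRing R, x ≠ 0 → (∀ E, 0 ≤ ord E x) →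
    ∃ r : R, algebraMap R (FractionRing R) r = x

namespace RegularBirationalModel

variable {R : Type*} [CommRing R] [IsDomain R] (M : RegularBirationalModel R)

/-- An ℝ-divisor `D = Σ aᵢ Eᵢ` on `X`, i.e. a finitely supported real-valued function on the
prime divisors of `X`. -/
def IsDivisor (D : M.PrimeDivisor → ℝ) : Prop := (Function.support D).Finite

/-- An effective divisor: all coefficients nonnegative. -/
def IsEffective (D : M.PrimeDivisor → ℝ) : Prop := ∀ E, 0 ≤ D E

/-- Linear equivalence of ℝ-divisors: `D₁ ∼ D₂` iff `D₁ − D₂ = (f)` for some `f ∈ K`. -/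
def LinEquiv (D₁ D₂ : M.PrimeDivisor → ℝ) : Prop :=
  ∃ x : FractionRing R, x ≠ 0 ∧ ∀ E, D₁ E - D₂ E = (M.ord E x : ℝ)

/-- `τ_Γ(D) = inf {ord_Γ(G) : G ≥ 0, G ∼ D}`. -/
noncomputable def tau (Γ : M.PrimeDivisor) (D : M.PrimeDivisor → ℝ) : ℝ :=
  sInf {t : ℝ | ∃ G : M.PrimeDivisor → ℝ, M.IsEffective G ∧ M.LinEquiv G D ∧ t = G Γ}

/-- `γ_Γ(D) = inf {τ_Γ(mD)/m : m ∈ ℤ_{>0}}`. -/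
noncomputable def gamma (Γ : M.PrimeDivisor) (D : M.PrimeDivisor → ℝ) : ℝ :=
  sInf {t : ℝ | ∃ m : ℕ, 0 < m ∧ t = M.tau Γ (fun E => m * D E) / m}

/-- The divisor `c Γ` supported on the single prime divisor `Γ`. -/
noncomputable def single (Γ : M.PrimeDivisor) (c : ℝ) : M.PrimeDivisor → ℝ :=
  open scoped Classical in fun E => if E = Γ then c else 0

/-- `Γ(X, O_X(⌊D⌋)) = {f ∈ K ∣ (f) + D ≥ 0} ⊆ K` (which only depends on `⌊D⌋` since the
functions `ord_E` are integer-valued). -/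
def sections (D : M.PrimeDivisor → ℝ) : Set (FractionRing R) :=
  {x | x = 0 ∨ ∀ E, 0 ≤ (M.ord E x : ℝ) + D E}

end RegularBirationalModel

lemma csInf_image_add_const {S : Set ℝ} (hne : S.Nonempty) (hbdd : BddBelow S) (c : ℝ) :
    sInf ((· + c) '' S) = sInf S + c :=
  ((OrderIso.addRight c).map_csInf' hne hbdd).symm

namespace RegularBirationalModel

variable {R : Type*} [CommRing R] [IsDomain R] {M : RegularBirationalModel R}

lemma ord_one (E : M.PrimeDivisor) : M.ord E 1 = 0 := by
  have h := M.ord_mul E 1 1 one_ne_zero one_ne_zero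
  rw [mul_one] at h
  omega

lemma ord_pow (E : M.PrimeDivisor) {x : FractionRing R} (hx : x ≠ 0) (n : ℕ) :
    M.ord E (x ^ n) = n * M.ord E x := by
  induction n with
  | zero => simp [ord_one]
  | succ n ih =>
    rw [pow_succ, M.ord_mul E _ x (pow_ne_zero n hx) hx, ih]
    push_cast
    ring

lemma LinEquiv.of_sub_eq {G D G' D' : M.PrimeDivisor → ℝ} (h : M.LinEquiv G D)
    (hsub : ∀ E, G' E - D' E = G E - D E) : M.LinEquiv G' D' := by
  obtain ⟨x, hx, hord⟩ := h
  exact ⟨x, hx, fun E => (hsub E).trans (hord E)⟩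

lemma LinEquiv.nsmul_add_nsmul {G₁ D₁ G₂ D₂ : M.PrimeDivisor → ℝ} (h₁ : M.LinEquiv G₁ D₁)
    (h₂ : M.LinEquiv G₂ D₂) (a b : ℕ) :
    M.LinEquiv (fun E => a * G₁ E + b * G₂ E) (fun E => a * D₁ E + b * D₂ E) := by
  obtain ⟨x, hx, hx'⟩ := h₁
  obtain ⟨y, hy, hy'⟩ := h₂
  refine ⟨x ^ a * y ^ b, mul_ne_zero (pow_ne_zero a hx) (pow_ne_zero b hy), fun E => ?_⟩
  rw [M.ord_mul E _ _ (pow_ne_zero a hx) (pow_ne_zero b hy), ord_pow E hx, ord_pow E hy]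
  push_cast
  linear_combination (a : ℝ) * hx' E + (b : ℝ) * hy' E

lemma single_apply_self (Γ : M.PrimeDivisor) (c : ℝ) : M.single Γ c Γ = c := by
  simp [single]

lemma single_apply_of_ne {Γ E : M.PrimeDivisor} (hE : E ≠ Γ) (c : ℝ) : M.single Γ c E = 0 := by
  simp [single, hE]

lemma single_nonneg (Γ : M.PrimeDivisor) {c : ℝ} (hc : 0 ≤ c) (E : M.PrimeDivisor) :
    0 ≤ M.single Γ c E := by
  unfold single
  split_ifs <;> simp [hc]

variable (Γ : M.PrimeDivisor) {D : M.PrimeDivisor → ℝ}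

lemma bddBelow_coeff_effective_linEquiv :
    BddBelow {t : ℝ | ∃ G, M.IsEffective G ∧ M.LinEquiv G D ∧ t = G Γ} :=
  ⟨0, by rintro t ⟨G, hG, -, rfl⟩; exact hG Γ⟩

lemma tau_le {G : M.PrimeDivisor → ℝ} (hG : M.IsEffective G) (hGD : M.LinEquiv G D) :
    M.tau Γ D ≤ G Γ :=
  csInf_le (bddBelow_coeff_effective_linEquiv Γ) ⟨G, hG, hGD, rfl⟩

lemma tau_nonneg : 0 ≤ M.tau Γ D :=
  Real.sInf_nonneg (by rintro t ⟨G, hG, -, rfl⟩; exact hG Γ)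

lemma bddBelow_tau_div :
    BddBelow {t : ℝ | ∃ m : ℕ, 0 < m ∧ t = M.tau Γ (fun E => m * D E) / m} :=
  ⟨0, by rintro t ⟨m, -, rfl⟩; exact div_nonneg (tau_nonneg Γ) m.cast_nonneg⟩

lemma gamma_le {m : ℕ} (hm : 0 < m) : M.gamma Γ D ≤ M.tau Γ (fun E => m * D E) / m :=
  csInf_le (bddBelow_tau_div Γ) ⟨m, hm, rfl⟩

lemma mul_gamma_le {m : ℕ} (hm : 0 < m) {G : M.PrimeDivisor → ℝ} (hG : M.IsEffective G)
    (hGD : M.LinEquiv G (fun E => m * D E)) : m * M.gamma Γ D ≤ G Γ := by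
  have hm' : (0 : ℝ) < m := Nat.cast_pos.2 hm
  calc m * M.gamma Γ D ≤ M.tau Γ (fun E => m * D E) := (le_div_iff₀' hm').1 (gamma_le Γ hm)
    _ ≤ G Γ := tau_le Γ hG hGD

lemma exists_effective_linEquiv (hΓ : 0 < M.gamma Γ D) {m : ℕ} (hm : 0 < m) :
    ∃ G, M.IsEffective G ∧ M.LinEquiv G (fun E => m * D E) := by
  by_contra! h
  have hempty : {t : ℝ | ∃ G, M.IsEffective G ∧ M.LinEquiv G (fun E => m * D E) ∧ t = G Γ} = ∅ :=
    Set.eq_empty_of_forall_notMem fun t ⟨G, hG, hGD, _⟩ => h G hG hGD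
  have := gamma_le Γ (D := D) hm
  rw [tau, hempty, Real.sInf_empty, zero_div] at this
  linarith

lemma coeff_nonneg_of_linEquiv (hΓ : 0 < M.gamma Γ D) {m : ℕ} {G : M.PrimeDivisor → ℝ}
    (hG : ∀ E, E ≠ Γ → 0 ≤ G E) (hGD : M.LinEquiv G (fun E => m * D E)) : 0 ≤ G Γ := by
  by_contra! hneg
  set γ := M.gamma Γ D
  set δ := -G Γ
  have hδ : 0 < δ := neg_pos.2 hneg
  obtain ⟨H, hH, hHD⟩ := exists_effective_linEquiv Γ hΓ one_pos
  have hγH : γ ≤ H Γ := by simpa using mul_gamma_le Γ one_pos hH hHD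
  -- `b` large enough that `δ < b γ`, then `n` maximal with `n G + b H` effective along `Γ`
  obtain ⟨b, hb⟩ := exists_nat_gt (δ / γ)
  have hbγ : δ < b * γ := (div_lt_iff₀ hΓ).1 hb
  have hb : 0 < b := Nat.cast_pos.1 ((div_pos hδ hΓ).trans hb)
  set n := ⌊b * H Γ / δ⌋₊
  have hn_le : n * δ ≤ b * H Γ :=
    (le_div_iff₀ hδ).1 (Nat.floor_le (div_nonneg (mul_nonneg b.cast_nonneg (hH Γ)) hδ.le))
  have hn_gt : b * H Γ < (n + 1) * δ := (div_lt_iff₀ hδ).1 (Nat.lt_floor_add_one _)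
  have hF : M.IsEffective (fun E => n * G E + b * H E) := by
    intro E
    by_cases hE : E = Γ
    · subst hE
      linarith
    · exact add_nonneg (mul_nonneg n.cast_nonneg (hG E hE)) (mul_nonneg b.cast_nonneg (hH E))
  have hFD : M.LinEquiv (fun E => n * G E + b * H E) (fun E => ((n * m + b : ℕ) : ℝ) * D E) :=
    (hGD.nsmul_add_nsmul hHD n b).of_sub_eq fun E => by push_cast; ring
  have hF_Γ := mul_gamma_le Γ (by omega) hF hFD
  push_cast at hF_Γ
  nlinarith [mul_nonneg (mul_nonneg n.cast_nonneg m.cast_nonneg) hΓ.le]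

lemma tau_add_single (hΓ : 0 < M.gamma Γ D) {s : ℝ} (hs : 0 ≤ s) {m : ℕ} (hm : 0 < m) :
    M.tau Γ (fun E => m * (D E + M.single Γ s E)) = M.tau Γ (fun E => m * D E) + m * s := by
  have hshift :
      {t : ℝ | ∃ G, M.IsEffective G ∧ M.LinEquiv G (fun E => m * (D E + M.single Γ s E)) ∧
        t = G Γ} =
      (· + m * s) '' {t : ℝ | ∃ G, M.IsEffective G ∧ M.LinEquiv G (fun E => m * D E) ∧
        t = G Γ} := by
    ext t
    constructor
    · rintro ⟨G, hG, hGD, rfl⟩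
      set G' := fun E => G E - m * M.single Γ s E
      have hG'D : M.LinEquiv G' (fun E => m * D E) := hGD.of_sub_eq fun E => by ring
      have hG'_off : ∀ E, E ≠ Γ → 0 ≤ G' E := fun E hE => by
        simpa [G', single_apply_of_ne hE] using hG E
      have hG' : M.IsEffective G' := fun E => by
        by_cases hE : E = Γ
        · exact hE ▸ coeff_nonneg_of_linEquiv Γ hΓ hG'_off hG'D
        · exact hG'_off E hE
      exact ⟨G' Γ, ⟨G', hG', hG'D, rfl⟩, by simp [G', single_apply_self]⟩
    · rintro ⟨_, ⟨G, hG, hGD, rfl⟩, rfl⟩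
      exact ⟨fun E => G E + m * M.single Γ s E,
        fun E => add_nonneg (hG E) (mul_nonneg m.cast_nonneg (single_nonneg Γ hs E)),
        hGD.of_sub_eq fun E => by ring, by simp [single_apply_self]⟩
  obtain ⟨G, hG, hGD⟩ := exists_effective_linEquiv Γ hΓ hm
  rw [tau, tau, hshift, csInf_image_add_const]
  · exact ⟨G Γ, G, hG, hGD, rfl⟩
  · exact bddBelow_coeff_effective_linEquiv Γ

lemma tau_add_single_div (hΓ : 0 < M.gamma Γ D) {s : ℝ} (hs : 0 ≤ s) {m : ℕ} (hm : 0 < m) :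
    M.tau Γ (fun E => m * (D E + M.single Γ s E)) / m = M.tau Γ (fun E => m * D E) / m + s := by
  rw [tau_add_single Γ hΓ hs hm]
  field_simp

end RegularBirationalModel

theorem gamma_add_single_general {R : Type u} [CommRing R] [IsDomain R]
    (M : RegularBirationalModel R) (D : M.PrimeDivisor → ℝ)
    (Γ : M.PrimeDivisor) (hΓ : 0 < M.gamma Γ D) (s : ℝ) (hs : 0 ≤ s) :
    M.gamma Γ (fun E => D E + M.single Γ s E) = M.gamma Γ D + s := by
  have hshift :
      {t : ℝ | ∃ m : ℕ, 0 < m ∧ t = M.tau Γ (fun E => m * (D E + M.single Γ s E)) / m} =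
      (· + s) '' {t : ℝ | ∃ m : ℕ, 0 < m ∧ t = M.tau Γ (fun E => m * D E) / m} := by
    ext t
    constructor
    · rintro ⟨m, hm, rfl⟩
      exact ⟨_, ⟨m, hm, rfl⟩, (M.tau_add_single_div Γ hΓ hs hm).symm⟩
    · rintro ⟨_, ⟨m, hm, rfl⟩, rfl⟩
      exact ⟨m, hm, (M.tau_add_single_div Γ hΓ hs hm).symm⟩
  rw [RegularBirationalModel.gamma, RegularBirationalModel.gamma, hshift, csInf_image_add_const]
  · exact ⟨_, 1, one_pos, rfl⟩
  · exact M.bddBelow_tau_div Γ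

/-- Lemma B. Let `R` be a normal excellent local ring,
`π : X → Spec R` a birational projective morphism with `X` regular, `D` an ℝ-divisor and
`Γ` a prime divisor on `X` with `γ_Γ(D) > 0`.  Then for every `s ∈ ℝ_{≥0}`,
`γ_Γ(D + sΓ) = γ_Γ(D) + s`. -/
theorem gamma_add_single {R : Type u} [CommRing R] [IsDomain R] [IsIntegrallyClosed R]
    [IsLocalRing R] (hexc : IsExcellentRing R)
    (M : RegularBirationalModel R) (D : M.PrimeDivisor → ℝ) (hD : M.IsDivisor D)
    (Γ : M.PrimeDivisor) (hΓ : 0 < M.gamma Γ D) (s : ℝ) (hs : 0 ≤ s) :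
    M.gamma Γ (fun E => D E + M.single Γ s E) = M.gamma Γ D + s :=
  gamma_add_single_general M D Γ hΓ s hs
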